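/- arXiv:1811.04771 — 4 statements merged into one kernel-verified Lean document; each statement's English description precedes it below -/
import Mathlib

section
/- For positive integers k and n and variables x_1,...,x_n in a commutative ring, e_k(x_1^2,...,x_n^2) = Σ_{i=-k}^{k} (-1)^i e_{k+i}(x_1,...,x_n) · e_{k-i}(x_1,...,x_n). -/
/-!
With `E_s(X) = ∏_{r ∈ s} (1 + r X) = ∑ₖ eₖ(s) Xᵏ`, the factorisation `(1 + r X)(1 - r X) = 1 - r² X²`
gives `E_s(X) E_s(-X) = E_{-s²}(X²)`. Comparing coefficients of `X^{2k}` yields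
`(-1)ᵏ eₖ(s²) = ∑_{a + b = 2k} (-1)ᵇ e_a(s) e_b(s)`, and writing `a = k + i`, `b = k - i` gives the claim.
-/

open Polynomial Finset

theorem Finset.Nat.sum_antidiagonal_two_mul_eq_sum_Icc {M : Type*} [AddCommMonoid M]
    (f : ℕ → ℕ → M) (k : ℕ) :
    ∑ p ∈ HasAntidiagonal.antidiagonal (2 * k), f p.1 p.2 =
      ∑ i ∈ Icc (-(k : ℤ)) k, f ((k : ℤ) + i).toNat ((k : ℤ) - i).toNat := by
  rw [Nat.sum_antidiagonal_eq_sum_range_succ_mk]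
  refine sum_nbij' (fun a => (a : ℤ) - k) (fun i => ((k : ℤ) + i).toNat) ?_ ?_ ?_ ?_ ?_ <;>
    intro a ha <;> simp only [mem_range, mem_Icc] at ha ⊢ <;> try omega
  congr <;> omega

section CommSemiring

variable {R : Type*} [CommSemiring R]

theorem Multiset.esymm_cons_succ (a : R) (s : Multiset R) (j : ℕ) :
    (a ::ₘ s).esymm (j + 1) = s.esymm (j + 1) + a * s.esymm j := by
  simp [esymm, powersetCard_cons, map_map, sum_map_mul_left]

theorem Multiset.prod_one_add_C_mul_X_coeff (s : Multiset R) (j : ℕ) :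
    (s.map fun r => 1 + C r * X).prod.coeff j = s.esymm j := by
  induction s using Multiset.induction_on generalizing j with
  | empty => cases j <;> simp [esymm, coeff_one, powersetCard_zero_right]
  | cons a s ih =>
    cases j with
    | zero => simp [esymm, coeff_zero_eq_eval_zero, eval_multiset_prod]
    | succ j => simp [add_mul, mul_assoc, ih, esymm_cons_succ]

end CommSemiring

section CommRing

variable {R : Type*} [CommRing R]

theorem Multiset.esymm_map_neg_sq (s : Multiset R) (k : ℕ) :
    (s.map fun r => -r ^ 2).esymm k =
      ∑ p ∈ HasAntidiagonal.antidiagonal (2 * k), s.esymm p.1 * (s.map Neg.neg).esymm p.2 := by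
  have hprod : (s.map fun r => 1 + C r * X).prod * ((s.map Neg.neg).map fun r => 1 + C r * X).prod
      = expand R 2 ((s.map fun r => -r ^ 2).map fun r => 1 + C r * X).prod := by
    simp only [map_map, Function.comp_def, ← prod_map_mul, map_multiset_prod]
    congr 1
    refine map_congr rfl fun r _ => ?_
    simp only [map_neg, map_pow, _root_.map_add, map_one, map_mul, expand_C, expand_X]
    ring
  rw [← prod_one_add_C_mul_X_coeff, mul_comm 2 k, ← coeff_expand_mul two_pos, ← hprod, coeff_mul]
  simp only [prod_one_add_C_mul_X_coeff]

theorem neg_one_pow_mul_neg_one_pow_toNat_sub (k : ℕ) {i : ℤ} (hi : i ≤ k) :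
    (-1 : R) ^ k * (-1) ^ ((k : ℤ) - i).toNat = (((-1 : ℤˣ) ^ i : ℤˣ) : ℤ) := by
  have h : (-1 : ℤˣ) ^ k * (-1) ^ ((k : ℤ) - i).toNat = (-1) ^ i := by
    rw [← zpow_natCast, ← zpow_natCast, Int.toNat_of_nonneg (by omega), zpow_sub, ← mul_assoc,
      Int.units_mul_self, one_mul, Int.units_inv_eq_self]
  simpa using congrArg (fun u : ℤˣ => ((u : ℤ) : R)) h

theorem Multiset.esymm_map_sq (s : Multiset R) (k : ℕ) :
    (s.map (· ^ 2)).esymm k =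
      ∑ i ∈ Finset.Icc (-(k : ℤ)) k, ((((-1 : ℤˣ) ^ i : ℤˣ) : ℤ) : R) *
        s.esymm ((k : ℤ) + i).toNat * s.esymm ((k : ℤ) - i).toNat := by
  have h := s.esymm_map_neg_sq k
  rw [show (s.map fun r => -r ^ 2) = (s.map (· ^ 2)).map Neg.neg by rw [map_map]; rfl] at h
  simp only [esymm_neg] at h
  rw [Nat.sum_antidiagonal_two_mul_eq_sum_Icc (fun a b => s.esymm a * ((-1) ^ b * s.esymm b))] at h
  calc (s.map (· ^ 2)).esymm k = (-1) ^ k * ((-1) ^ k * (s.map (· ^ 2)).esymm k) := by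
        rw [← mul_assoc, ← mul_pow, neg_one_mul, neg_neg, one_pow, one_mul]
    _ = _ := by
        rw [h, mul_sum]
        refine sum_congr rfl fun i hi => ?_
        rw [← neg_one_pow_mul_neg_one_pow_toNat_sub k (Finset.mem_Icc.1 hi).2]
        ring

end CommRing

theorem esymm_sq_convolution_general {R : Type*} [CommRing R]
    (k n : ℕ) (x : Fin n → R) :
    Multiset.esymm (((List.ofFn x).map (fun t => t ^ 2) : List R) : Multiset R) k =
      ∑ i ∈ Finset.Icc (-(k : ℤ)) (k : ℤ),
        (((((-1 : ℤˣ) ^ i : ℤˣ) : ℤ) : R)) *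
          Multiset.esymm ((List.ofFn x : List R) : Multiset R) ((k : ℤ) + i).toNat *
          Multiset.esymm ((List.ofFn x : List R) : Multiset R) ((k : ℤ) - i).toNat := by
  rw [← Multiset.map_coe]
  exact Multiset.esymm_map_sq _ k

/-- Corollary 1.2: `e_k(x₁²,…,x_n²) = ∑_{i=-k}^{k} (-1)^i e_{k+i}(x) e_{k-i}(x)`. -/
theorem esymm_sq_convolution {R : Type*} [CommRing R]
    (k n : ℕ) (hk : 0 < k) (hn : 0 < n) (x : Fin n → R) :
    Multiset.esymm (((List.ofFn x).map (fun t => t ^ 2) : List R) : Multiset R) k =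
      ∑ i ∈ Finset.Icc (-(k : ℤ)) (k : ℤ),
        (((((-1 : ℤˣ) ^ i : ℤˣ) : ℤ) : R)) *
          Multiset.esymm ((List.ofFn x : List R) : Multiset R) ((k : ℤ) + i).toNat *
          Multiset.esymm ((List.ofFn x : List R) : Multiset R) ((k : ℤ) - i).toNat :=
  esymm_sq_convolution_general k n x
end

section
/- q-Vandermonde convolution: for nonnegative integers k ≤ n and t ≤ n, Σ_{i=0}^{k} q^{(k-i)(t-i)} · [t choose i]_q · [n-t choose k-i]_q = [n choose k]_q, as an identity of polynomials in q. -/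
/-- The `q`-shifted factorial `(q;q)_n = (1-q)(1-q²)⋯(1-qⁿ)` in the field of
rational functions `ℚ(q)` (with `q = RatFunc.X`). -/
noncomputable def qShiftedFactorial (n : ℕ) : RatFunc ℚ :=
  ∏ j ∈ Finset.range n, (1 - RatFunc.X ^ (j + 1))

/-- The Gaussian (q-)binomial coefficient `[n choose k]_q = (q;q)_n / ((q;q)_k (q;q)_{n-k})`
for `0 ≤ k ≤ n` and `0` otherwise. -/
noncomputable def gaussBinom (n k : ℕ) : RatFunc ℚ :=
  if k ≤ n then qShiftedFactorial n / (qShiftedFactorial k * qShiftedFactorial (n - k)) else 0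

lemma one_sub_X_pow_ne_zero (p : ℕ) : (1 : RatFunc ℚ) - RatFunc.X ^ (p + 1) ≠ 0 := by
  rw [sub_ne_zero]
  intro h
  rw [← RatFunc.algebraMap_X (K := ℚ), ← map_pow, ← map_one (algebraMap (Polynomial ℚ) (RatFunc ℚ))] at h
  have := IsFractionRing.injective (Polynomial ℚ) (RatFunc ℚ) h.symm
  simpa using congrArg Polynomial.natDegree this

lemma qsf_ne_zero (n : ℕ) : qShiftedFactorial n ≠ 0 :=
  Finset.prod_ne_zero_iff.mpr fun j _ => one_sub_X_pow_ne_zero j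

lemma qsf_zero : qShiftedFactorial 0 = 1 := by simp [qShiftedFactorial]

lemma qsf_succ (n : ℕ) :
    qShiftedFactorial (n + 1) = qShiftedFactorial n * (1 - RatFunc.X ^ (n + 1)) :=
  Finset.prod_range_succ _ n

lemma gauss_zero_right (n : ℕ) : gaussBinom n 0 = 1 := by
  simp [gaussBinom, qsf_zero, div_self (qsf_ne_zero n)]

lemma gauss_self (n : ℕ) : gaussBinom n n = 1 := by
  simp [gaussBinom, qsf_zero, div_self (qsf_ne_zero n)]

lemma gauss_of_lt {n k : ℕ} (h : n < k) : gaussBinom n k = 0 := by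
  simp [gaussBinom, Nat.not_le.mpr h]

lemma pascal (m i : ℕ) (hi : 1 ≤ i) :
    gaussBinom (m + 1) i = gaussBinom m (i - 1) + RatFunc.X ^ i * gaussBinom m i := by
  rcases lt_trichotomy i (m + 1) with h | rfl | h
  · have him : i ≤ m := by omega
    have e2 : i = (i - 1) + 1 := by omega
    have e3 : m + 1 - i = (m - i) + 1 := by omega
    have e4 : m - (i - 1) = m + 1 - i := by omega
    have h1 : gaussBinom (m + 1) i =
        qShiftedFactorial m * (1 - RatFunc.X ^ (m + 1)) /
          (qShiftedFactorial i * qShiftedFactorial (m + 1 - i)) := by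
      simp [gaussBinom, Nat.le_of_lt h, qsf_succ]
    have h2 : gaussBinom m (i - 1) =
        qShiftedFactorial m / (qShiftedFactorial (i - 1) * qShiftedFactorial (m + 1 - i)) := by
      simp [gaussBinom, show i - 1 ≤ m by omega, e4]
    have h3 : gaussBinom m i =
        qShiftedFactorial m / (qShiftedFactorial i * qShiftedFactorial (m - i)) := by
      simp [gaussBinom, him]
    have hqi : qShiftedFactorial i = qShiftedFactorial (i - 1) * (1 - RatFunc.X ^ i) := by
      conv_lhs => rw [e2]
      rw [qsf_succ, ← e2]
    have hqmi : qShiftedFactorial (m + 1 - i) =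
        qShiftedFactorial (m - i) * (1 - RatFunc.X ^ (m + 1 - i)) := by
      rw [e3, qsf_succ, ← e3]
    have hx : RatFunc.X ^ i * RatFunc.X ^ (m + 1 - i) = (RatFunc.X : RatFunc ℚ) ^ (m + 1) := by
      rw [← pow_add]; congr 1; omega
    have key : (1 : RatFunc ℚ) - RatFunc.X ^ (m + 1) =
        (1 - RatFunc.X ^ i) + RatFunc.X ^ i * (1 - RatFunc.X ^ (m + 1 - i)) := by
      rw [mul_sub, mul_one, hx]; ring
    have hb := qsf_ne_zero (i - 1)
    have hc := qsf_ne_zero (m - i)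
    have hu : (1 : RatFunc ℚ) - RatFunc.X ^ i ≠ 0 := by
      rw [e2]; exact one_sub_X_pow_ne_zero (i - 1)
    have hv : (1 : RatFunc ℚ) - RatFunc.X ^ (m + 1 - i) ≠ 0 := by
      rw [e3]; exact one_sub_X_pow_ne_zero (m - i)
    rw [h1, h2, h3, hqi, hqmi, key]
    field_simp
  · rw [Nat.add_sub_cancel, gauss_self, gauss_self, gauss_of_lt (Nat.lt_succ_self m),
      mul_zero, add_zero]
  · rw [gauss_of_lt h, gauss_of_lt (show m < i - 1 by omega),
      gauss_of_lt (show m < i by omega), mul_zero, add_zero]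


/-- q-Vandermonde convolution:
`∑_{i=0}^{k} q^{(k-i)(t-i)} [t choose i]_q [n-t choose k-i]_q = [n choose k]_q`. -/
theorem q_vandermonde (n k t : ℕ) (hk : k ≤ n) (ht : t ≤ n) :
    ∑ i ∈ Finset.range (k + 1),
        RatFunc.X ^ ((k - i) * (t - i)) * gaussBinom t i * gaussBinom (n - t) (k - i) =
      gaussBinom n k := by
  induction t generalizing n k with
  | zero =>
    rw [Finset.sum_eq_single 0]
    · simp [gauss_zero_right]
    · intro i _ hi
      rw [gauss_of_lt (by omega : 0 < i)]
      ring
    · intro h; exact absurd (Finset.mem_range.mpr (by omega)) h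
  | succ t ih =>
    rcases Nat.eq_zero_or_pos k with rfl | hk1
    · simp [gauss_zero_right]
    rcases eq_or_lt_of_le hk with rfl | hkn
    · -- k = n
      rw [Finset.sum_eq_single (t + 1)]
      · rw [Nat.sub_self, Nat.mul_zero, pow_zero, gauss_self, gauss_self]
        ring_nf
        rw [gauss_self]
      · intro i _ hi
        rcases lt_or_gt_of_ne hi with h | h
        · rw [gauss_of_lt (show k - (t + 1) < k - i by omega), mul_zero]
        · rw [gauss_of_lt (show t + 1 < i from h), mul_zero, zero_mul]
      · intro h; exact absurd (Finset.mem_range.mpr (by omega)) h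
    · -- 1 ≤ k < n, t + 1 ≤ n
      have htn : t ≤ n - 1 := by omega
      have hkn' : k ≤ n - 1 := by omega
      have key : ∀ i ∈ Finset.range (k + 1),
          RatFunc.X ^ ((k - i) * (t + 1 - i)) * gaussBinom (t + 1) i *
              gaussBinom (n - (t + 1)) (k - i) =
            (if i = 0 then 0 else
              RatFunc.X ^ ((k - i) * (t + 1 - i)) * gaussBinom t (i - 1) *
                gaussBinom (n - (t + 1)) (k - i)) +
            RatFunc.X ^ k *
              (RatFunc.X ^ ((k - i) * (t - i)) * gaussBinom t i *
                gaussBinom ((n - 1) - t) (k - i)) := by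
        intro i hi
        rw [Finset.mem_range] at hi
        have hnt : n - (t + 1) = (n - 1) - t := by omega
        rcases Nat.eq_zero_or_pos i with rfl | hi1
        · rw [if_pos rfl, zero_add]
          simp only [Nat.sub_zero]
          rw [gauss_zero_right, gauss_zero_right, hnt,
            show k * (t + 1) = k + k * t by ring, pow_add]
          ring
        · rw [if_neg (by omega), pascal t i hi1, hnt]
          rcases le_or_gt i t with hit | hit
          · have hX : (RatFunc.X : RatFunc ℚ) ^ ((k - i) * (t + 1 - i)) * RatFunc.X ^ i
                = RatFunc.X ^ k * RatFunc.X ^ ((k - i) * (t - i)) := by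
              rw [← pow_add, ← pow_add]
              congr 1
              rw [show t + 1 - i = (t - i) + 1 by omega, Nat.mul_add, Nat.mul_one,
                add_assoc, Nat.sub_add_cancel (by omega : i ≤ k)]
              ring
            linear_combination (gaussBinom t i * gaussBinom ((n - 1) - t) (k - i)) * hX
          · rw [gauss_of_lt hit]
            ring
      rw [Finset.sum_congr rfl key, Finset.sum_add_distrib, ← Finset.mul_sum,
        ih (n - 1) k hkn' htn]
      rw [Finset.sum_range_succ']
      rw [if_pos (rfl : (0 : ℕ) = 0), add_zero]
      have hsum : ∑ i ∈ Finset.range k,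
          (if i + 1 = 0 then 0 else
            RatFunc.X ^ ((k - (i + 1)) * (t + 1 - (i + 1))) * gaussBinom t (i + 1 - 1) *
              gaussBinom (n - (t + 1)) (k - (i + 1))) =
          ∑ i ∈ Finset.range ((k - 1) + 1),
            RatFunc.X ^ (((k - 1) - i) * (t - i)) * gaussBinom t i *
              gaussBinom ((n - 1) - t) ((k - 1) - i) := by
        apply Finset.sum_congr (by rw [Nat.sub_add_cancel hk1])
        intro i _
        rw [if_neg (Nat.succ_ne_zero i)]
        have e1 : k - (i + 1) = k - 1 - i := by omega
        have e2 : t + 1 - (i + 1) = t - i := by omega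
        have e4 : n - (t + 1) = n - 1 - t := by omega
        rw [e1, e2, e4, Nat.add_sub_cancel]
      rw [hsum, ih (n - 1) (k - 1) (by omega) htn]
      rw [← pascal (n - 1) k hk1, show n - 1 + 1 = n by omega]
end

section
/- r-Stirling convolution of the first kind: for positive integers r < t ≤ k < n, Σ_{i=0}^{n-k} s_r(t, t-i) · s_t(n, k+i) = s_r(n, k), where s_r(n, k) denotes the (unsigned) r-Stirling number of the first kind, realized via the identity s_r(n+1, n+1-j) = e_j(r, r+1, ..., n). -/
/-- The unsigned `r`-Stirling number of the first kind, realized via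
`s_r(n+1, n+1-j) = e_j(r, r+1, …, n)`: here `rStirling₁ r N K` is the `(N-K)`-th
elementary symmetric function of the integers `r, r+1, …, N-1`. -/
noncomputable def rStirling₁ (r N K : ℕ) : ℤ :=
  Multiset.esymm
    (((List.range (N - r)).map (fun t => ((r + t : ℕ) : ℤ)) : List ℤ) : Multiset ℤ) (N - K)

noncomputable def MS (r N : ℕ) : Multiset ℤ :=
  (Multiset.range (N - r)).map (fun t => ((r + t : ℕ) : ℤ))

lemma rStirling_eq (r N K : ℕ) : rStirling₁ r N K = (MS r N).esymm (N - K) := rfl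

lemma MS_card (r N : ℕ) : Multiset.card (MS r N) = N - r := by simp [MS]

lemma MS_add {r t n : ℕ} (h1 : r ≤ t) (h2 : t ≤ n) : MS r n = MS r t + MS t n := by
  have h : n - r = (t - r) + (n - t) := by omega
  rw [MS, h, Multiset.range_add, Multiset.map_add]
  congr 1
  rw [Multiset.map_map]
  apply Multiset.map_congr rfl
  intro j _
  simp only [Function.comp_apply]
  congr 1
  omega

noncomputable def P (r N : ℕ) : Polynomial ℤ :=
  ((MS r N).map (fun x => Polynomial.X + Polynomial.C x)).prod

lemma coeff_P {r K N : ℕ} (h1 : r ≤ K) (h2 : K ≤ N) :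
    (P r N).coeff (K - r) = rStirling₁ r N K := by
  rw [P, Multiset.prod_X_add_C_coeff _ (by rw [MS_card]; omega), MS_card, rStirling_eq]
  congr 1
  omega

lemma coeff_P_zero {r N a : ℕ} (h : N - r < a) : (P r N).coeff a = 0 := by
  apply Polynomial.coeff_eq_zero_of_natDegree_lt
  calc (P r N).natDegree ≤ (((MS r N).map (fun x => Polynomial.X + Polynomial.C x)).map
        Polynomial.natDegree).sum := Polynomial.natDegree_multiset_prod_le _
    _ = (Multiset.map (fun _ : ℤ => 1) (MS r N)).sum := by
        rw [Multiset.map_map]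
        exact congrArg _ (Multiset.map_congr rfl fun x _ => Polynomial.natDegree_X_add_C x)
    _ = N - r := by
        rw [Multiset.map_const', Multiset.sum_replicate, smul_eq_mul, mul_one, MS_card]
    _ < a := h

lemma rStirling_zero {r N K : ℕ} (h : N - r < N - K) : rStirling₁ r N K = 0 := by
  rw [rStirling_eq, Multiset.esymm,
    Multiset.powersetCard_eq_empty _ (by rw [MS_card]; exact h)]
  simp

/-- Broder's convolution identity for `r`-Stirling numbers of the first kind:
for `r < t ≤ k < n`, `∑_{i=0}^{n-k} s_r(t, t-i) · s_t(n, k+i) = s_r(n, k)`. -/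
theorem rStirling_first_convolution (r t k n : ℕ) (hr : 0 < r)
    (hrt : r < t) (htk : t ≤ k) (hkn : k < n) :
    ∑ i ∈ Finset.range (n - k + 1), rStirling₁ r t (t - i) * rStirling₁ t n (k + i) =
      rStirling₁ r n k := by
  set m := min (n - k) (t - r) with hm
  have hm1 : m ≤ n - k := min_le_left _ _
  have hm2 : m ≤ t - r := min_le_right _ _
  have hm3 : m = n - k ∨ m = t - r := by omega
  have hfg : ∀ i ∈ Finset.range (m + 1),
      rStirling₁ r t (t - i) * rStirling₁ t n (k + i)
        = (P r t).coeff (t - r - i) * (P t n).coeff (k - r - (t - r - i)) := by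
    intro i hi
    simp only [Finset.mem_range] at hi
    have e1 : (P r t).coeff (t - r - i) = rStirling₁ r t (t - i) := by
      have h := coeff_P (r := r) (K := t - i) (N := t) (by omega) (by omega)
      rwa [show t - i - r = t - r - i by omega] at h
    have e2 : (P t n).coeff (k - r - (t - r - i)) = rStirling₁ t n (k + i) := by
      have h := coeff_P (r := t) (K := k + i) (N := n) (by omega) (by omega)
      rwa [show k + i - t = k - r - (t - r - i) by omega] at h
    rw [e1, e2]
  have hL : ∑ i ∈ Finset.range (n - k + 1), rStirling₁ r t (t - i) * rStirling₁ t n (k + i)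
      = ∑ i ∈ Finset.range (m + 1), rStirling₁ r t (t - i) * rStirling₁ t n (k + i) := by
    symm
    apply Finset.sum_subset (Finset.range_subset_range.2 (by omega))
    intro i hi hni
    simp only [Finset.mem_range] at hi hni
    rw [rStirling_zero (by omega : t - r < t - (t - i)), zero_mul]
  rw [hL, Finset.sum_congr rfl hfg,
    ← coeff_P (le_of_lt (lt_of_lt_of_le hrt htk)) (by omega : k ≤ n),
    show P r n = P r t * P t n from by
      rw [P, P, P, MS_add (le_of_lt hrt) (by omega), Multiset.map_add, Multiset.prod_add],
    Polynomial.coeff_mul, Finset.Nat.sum_antidiagonal_eq_sum_range_succ_mk]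
  have hR : ∑ a ∈ Finset.range (k - r + 1), (P r t).coeff a * (P t n).coeff (k - r - a)
      = ∑ a ∈ Finset.Ico (t - r - m) (t - r + 1),
          (P r t).coeff a * (P t n).coeff (k - r - a) := by
    symm
    apply Finset.sum_subset
    · intro a ha
      simp only [Finset.mem_Ico, Finset.mem_range] at *
      omega
    · intro a ha hna
      simp only [Finset.mem_range] at ha
      simp only [Finset.mem_Ico, not_and, not_lt] at hna
      rcases lt_or_ge (t - r) a with h | h
      · rw [coeff_P_zero h, zero_mul]
      · rw [coeff_P_zero (r := t) (N := n) (by omega : n - t < k - r - a), mul_zero]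
  rw [hR]
  symm
  apply Finset.sum_nbij' (i := fun a => t - r - a) (j := fun i => t - r - i)
  · intro a ha
    simp only [Finset.mem_Ico, Finset.mem_range] at *
    omega
  · intro i hi
    simp only [Finset.mem_Ico, Finset.mem_range] at *
    omega
  · intro a ha
    simp only [Finset.mem_Ico] at ha
    omega
  · intro i hi
    simp only [Finset.mem_range] at hi
    omega
  · intro a ha
    simp only [Finset.mem_Ico] at ha
    rw [show t - r - (t - r - a) = a by omega]
end

section
/- r-Stirling convolution of the second kind: for positive integers r < t ≤ k < n, Σ_{i=0}^{n-k} S_r(t+i, t) · S_{t+1}(n-i, k) = S_r(n, k), where S_r(n, k) denotes the r-Stirling number of the second kind, realized via the identity S_r(n+j, n) = h_j(r, r+1, ..., n). -/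
/-- The `k`-th complete homogeneous symmetric function of the entries of a list. -/
noncomputable def hsymmList {R : Type*} [CommRing R] (l : List R) (k : ℕ) : R :=
  ∑ f ∈ Finset.univ.filter (fun f : Fin k → Fin l.length => Monotone f),
    ∏ i : Fin k, l.get (f i)

/-- The `r`-Stirling number of the second kind, realized via
`S_r(n+j, n) = h_j(r, r+1, …, n)`: here `rStirling₂ r N K` is the `(N-K)`-th
complete homogeneous symmetric function of the integers `r, r+1, …, K`. -/
noncomputable def rStirling₂ (r N K : ℕ) : ℤ :=
  hsymmList ((List.range (K + 1 - r)).map (fun t => ((r + t : ℕ) : ℤ))) (N - K)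

variable {R : Type*} [CommRing R]

lemma hsymm_zero (l : List R) : hsymmList l 0 = 1 := by
  simp [hsymmList, Finset.filter_singleton]
  have h : Monotone (default : Fin 0 → Fin l.length) :=
    fun a b _ => le_of_eq (congrArg _ (Subsingleton.elim a b))
  rw [if_pos h]
  simp

lemma hsymm_nil (m : ℕ) : hsymmList ([] : List R) (m+1) = 0 := by
  simp [hsymmList]

lemma hsymm_cons (x : R) (l : List R) (m : ℕ) :
    hsymmList (x :: l) (m + 1) = x * hsymmList (x :: l) m + hsymmList l (m + 1) := by
  classical
  show (∑ f ∈ Finset.univ.filter (fun f : Fin (m+1) → Fin (l.length + 1) => Monotone f),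
      ∏ i : Fin (m+1), (x :: l).get (f i)) = _
  rw [← Finset.sum_filter_add_sum_filter_not _ (fun f => f 0 = 0)]
  congr 1
  · -- case f 0 = 0
    rw [show hsymmList (x :: l) m =
      ∑ g ∈ Finset.univ.filter (fun g : Fin m → Fin (l.length + 1) => Monotone g),
        ∏ i : Fin m, (x :: l).get (g i) from rfl, Finset.mul_sum]
    refine Finset.sum_bij' (fun f _ => f ∘ Fin.succ) (fun g _ => Fin.cons 0 g)
      ?_ ?_ ?_ ?_ ?_
    · intro f hf
      simp only [Finset.mem_filter, Finset.mem_univ, true_and] at hf ⊢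
      exact fun a b hab => hf.1 (Fin.succ_le_succ_iff.mpr hab)
    · intro g hg
      simp only [Finset.mem_filter, Finset.mem_univ, true_and] at hg ⊢
      constructor
      · intro a b hab
        induction b using Fin.cases with
        | zero =>
          have : a = 0 := le_antisymm hab (Fin.zero_le a)
          simp [this]
        | succ b' =>
          induction a using Fin.cases with
          | zero => simp [Fin.zero_le]
          | succ a' =>
            simp only [Fin.cons_succ]
            exact hg (by exact_mod_cast Fin.succ_le_succ_iff.mp hab)
      · simp
    · intro f hf
      simp only [Finset.mem_filter, Finset.mem_univ, true_and] at hf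
      funext i
      induction i using Fin.cases with
      | zero => simp [hf.2]
      | succ i' => simp
    · intro g hg
      funext i
      simp
    · intro f hf
      simp only [Finset.mem_filter, Finset.mem_univ, true_and] at hf
      rw [Fin.prod_univ_succ, hf.2]
      simp
  · -- case f 0 ≠ 0
    rw [show hsymmList l (m+1) =
      ∑ g ∈ Finset.univ.filter (fun g : Fin (m+1) → Fin l.length => Monotone g),
        ∏ i : Fin (m+1), l.get (g i) from rfl]
    refine Finset.sum_bij'
      (fun f hf => fun i => (f i).pred (by
        simp only [Finset.mem_filter, Finset.mem_univ, true_and] at hf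
        intro h0
        exact hf.2 (le_antisymm (h0 ▸ hf.1 (Fin.zero_le i)) (Fin.zero_le _))))
      (fun g _ => fun i => (g i).succ) ?_ ?_ ?_ ?_ ?_
    · intro f hf
      simp only [Finset.mem_filter, Finset.mem_univ, true_and] at hf ⊢
      intro a b hab
      exact Fin.pred_le_pred_iff.mpr (hf.1 hab)
    · intro g hg
      simp only [Finset.mem_filter, Finset.mem_univ, true_and] at hg ⊢
      refine ⟨fun a b hab => Fin.succ_le_succ_iff.mpr (hg hab), by simp [Fin.succ_ne_zero]⟩
    · intro f hf; funext i; simp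
    · intro g hg; funext i; simp
    · intro f hf
      simp only [Finset.mem_filter, Finset.mem_univ, true_and] at hf
      refine Finset.prod_congr rfl (fun i _ => ?_)
      have h0 : (f i : ℕ) ≠ 0 := by
        intro h
        exact hf.2 (le_antisymm ((Fin.ext h : f i = 0) ▸ hf.1 (Fin.zero_le i)) (Fin.zero_le _))
      simp [List.get_eq_getElem, List.getElem_cons, h0, Fin.coe_pred]

lemma hsymm_append (l1 l2 : List R) (m : ℕ) :
    hsymmList (l1 ++ l2) m = ∑ i ∈ Finset.range (m + 1), hsymmList l1 i * hsymmList l2 (m - i) := by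
  induction l1 generalizing m with
  | nil =>
    simp only [List.nil_append]
    rw [Finset.sum_eq_single 0]
    · simp [hsymm_zero]
    · intro i _ hi
      obtain ⟨j, rfl⟩ := Nat.exists_eq_succ_of_ne_zero hi
      simp [hsymm_nil]
    · simp
  | cons x l1 IH =>
    simp only [List.cons_append]
    induction m with
    | zero => simp [hsymm_zero]
    | succ m IHm =>
      rw [hsymm_cons, IHm, IH]
      rw [Finset.sum_range_succ' (fun i => hsymmList (x :: l1) i * hsymmList l2 (m + 1 - i))]
      simp only [hsymm_zero, one_mul, Nat.sub_zero]
      rw [Finset.mul_sum, Finset.sum_range_succ' (fun i => hsymmList l1 i * hsymmList l2 (m + 1 - i))]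
      simp only [hsymm_zero, one_mul, Nat.sub_zero]
      rw [← add_assoc]
      congr 1
      rw [← Finset.sum_add_distrib]
      refine Finset.sum_congr rfl (fun i hi => ?_)
      rw [hsymm_cons, add_mul, mul_assoc, Nat.succ_sub_succ]

/-- Broder's convolution identity for `r`-Stirling numbers of the second kind:
for `r < t ≤ k < n`, `∑_{i=0}^{n-k} S_r(t+i, t) · S_{t+1}(n-i, k) = S_r(n, k)`. -/
theorem rStirling_second_convolution (r t k n : ℕ) (hr : 0 < r)
    (hrt : r < t) (htk : t ≤ k) (hkn : k < n) :
    ∑ i ∈ Finset.range (n - k + 1), rStirling₂ r (t + i) t * rStirling₂ (t + 1) (n - i) k =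
      rStirling₂ r n k := by
  have hlist : (List.range (k + 1 - r)).map (fun s => ((r + s : ℕ) : ℤ)) =
      (List.range (t + 1 - r)).map (fun s => ((r + s : ℕ) : ℤ)) ++
        (List.range (k + 1 - (t + 1))).map (fun s => ((t + 1 + s : ℕ) : ℤ)) := by
    have h1 : k + 1 - r = (t + 1 - r) + (k + 1 - (t + 1)) := by omega
    rw [h1, List.range_add, List.map_append, List.map_map]
    congr 1
    apply List.map_congr_left
    intro s _
    simp only [Function.comp_apply]
    congr 1
    omega
  unfold rStirling₂
  rw [hlist, hsymm_append]
  refine Finset.sum_congr rfl (fun i hi => ?_)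
  simp only [Finset.mem_range] at hi
  congr 2
  · omega
  · omega
end
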